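/- Let Φ be a multiflow on a space X and U ⊆ X. Then for any fixed t > 0, ω(U;Φᵗ) ⊆ ω(U;Φ), where ω(U;Φᵗ) = ⋂𝔎(U;Φᵗ) and ω(U;Φ) = ⋂𝔎(U;Φ). -/
import Mathlib


open Set

/-- The image of a set `S` under a relation `f ⊆ X × X`. -/
def RelImage {X : Type*} (f : Set (X × X)) (S : Set X) : Set X :=
  {y | ∃ x ∈ S, (x, y) ∈ f}

/-- Composition of relations: `RelComp f g` is `f ∘ g` (apply `g` first). -/
def RelComp {X : Type*} (f g : Set (X × X)) : Set (X × X) :=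
  {p | ∃ z, (p.1, z) ∈ g ∧ (z, p.2) ∈ f}

/-- The fixed-time relation `Φᵗ` of a multiflow `Φ ⊆ [0,∞) × X × X`. -/
def MFt {X : Type*} (Φ : Set (ℝ × X × X)) (t : ℝ) : Set (X × X) :=
  {p | (t, p.1, p.2) ∈ Φ}

/-- `Φ` is a multiflow: it lives over nonnegative times, `Φ⁰` is the identity
relation, and `Φ^{s+t} = Φˢ ∘ Φᵗ`. (Closedness of `Φ` is stated separately.) -/
def IsMultiflow {X : Type*} (Φ : Set (ℝ × X × X)) : Prop :=
  (∀ p ∈ Φ, 0 ≤ p.1) ∧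
  MFt Φ 0 = {p | p.2 = p.1} ∧
  ∀ s t : ℝ, 0 ≤ s → 0 ≤ t → MFt Φ (s + t) = RelComp (MFt Φ s) (MFt Φ t)

/-- The collection `𝔎(U;Φ)`: closed sets confining for `Φ` containing some forward image
of `U`. -/
def KSetMF {X : Type*} [TopologicalSpace X] (Φ : Set (ℝ × X × X)) (U : Set X) :
    Set (Set X) :=
  {K | IsClosed K ∧ (∀ t : ℝ, 0 < t → RelImage (MFt Φ t) K ⊆ K) ∧
    ∃ t : ℝ, 0 < t ∧ RelImage (MFt Φ t) U ⊆ K}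

lemma relImage_comp {X : Type*} (f g : Set (X × X)) (S : Set X) :
    RelImage (RelComp f g) S = RelImage f (RelImage g S) := by
  ext y
  constructor
  · rintro ⟨x, hx, z, hz1, hz2⟩
    exact ⟨z, ⟨x, hx, hz1⟩, hz2⟩
  · rintro ⟨z, ⟨x, hx, hz1⟩, hz2⟩
    exact ⟨x, hx, z, hz1, hz2⟩

lemma relImage_mono {X : Type*} (f : Set (X × X)) {S T : Set X} (h : S ⊆ T) :
    RelImage f S ⊆ RelImage f T := by
  rintro y ⟨x, hx, hxy⟩
  exact ⟨x, h hx, hxy⟩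

theorem stmt17 {X : Type*} [TopologicalSpace X] (Φ : Set (ℝ × X × X))
    (hcl : IsClosed Φ) (hΦ : IsMultiflow Φ) (U : Set X) (t : ℝ) (ht : 0 < t) :
    ⋂₀ {K : Set X | IsClosed K ∧ RelImage (MFt Φ t) K ⊆ K ∧
        ∃ n : ℕ, 1 ≤ n ∧ RelImage (MFt Φ ((n : ℝ) * t)) U ⊆ K} ⊆
      ⋂₀ KSetMF Φ U := by
  refine Set.sInter_subset_sInter ?_
  rintro K ⟨hKcl, hKconf, s, hs, hsU⟩
  refine ⟨hKcl, hKconf t ht, ?_⟩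
  obtain ⟨n, hn1, hnt⟩ : ∃ n : ℕ, 1 ≤ n ∧ s ≤ (n : ℝ) * t := by
    obtain ⟨m, hm⟩ := exists_nat_ge (s / t)
    refine ⟨max m 1, le_max_right _ _, ?_⟩
    have : s / t ≤ (max m 1 : ℕ) := hm.trans (by exact_mod_cast Nat.le_max_left m 1)
    calc s = s / t * t := by field_simp
    _ ≤ (max m 1 : ℕ) * t := by nlinarith
  refine ⟨n, by exact_mod_cast hn1, ?_⟩
  rcases eq_or_lt_of_le hnt with heq | hlt
  · rwa [← heq]
  · have hsplit := hΦ.2.2 ((n : ℝ) * t - s) s (by linarith) hs.le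
    rw [sub_add_cancel] at hsplit
    rw [hsplit, relImage_comp]
    exact (relImage_mono _ hsU).trans (hKconf _ (by linarith))
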